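/- arXiv:1305.4447 — 2 statements merged into one kernel-verified Lean document; each statement's English description precedes it below -/
import Mathlib

section
/- The quasi-shuffle (stuffle) product on k⟨Y⟩ is associative. -/
open scoped TensorProduct
open Finset

noncomputable section

/-- The alphabet `Y = {y_n : n ≥ 1}` and words over it. -/
abbrev Word : Type := FreeMonoid ℕ+

/-- `k⟨Y⟩`, the span of the words over `Y`, with the concatenation product. -/
abbrev QSh (k : Type) [CommRing k] : Type := MonoidAlgebra k Word

/-- The letter `y_n` viewed in `k⟨Y⟩`, with the convention `y_0 = 1`. -/
def yy (k : Type) [CommRing k] (n : ℕ) : QSh k :=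
  if h : 0 < n then MonoidAlgebra.of k Word (FreeMonoid.of (⟨n, h⟩ : ℕ+)) else 1

/-- The quasi-shuffle (stuffle) product of two words, with values in `k⟨Y⟩`:
`1 ⊛ v = v`, `u ⊛ 1 = u`, and
`(y_a u) ⊛ (y_b v) = y_a (u ⊛ y_b v) + y_b (y_a u ⊛ v) + y_{a+b} (u ⊛ v)`. -/
def stuffleAux (k : Type) [CommRing k] : List ℕ+ → List ℕ+ → QSh k
  | [], v => MonoidAlgebra.of k Word (FreeMonoid.ofList v)
  | a :: u, [] => MonoidAlgebra.of k Word (FreeMonoid.ofList (a :: u))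
  | a :: u, b :: v =>
      MonoidAlgebra.of k Word (FreeMonoid.of a) * stuffleAux k u (b :: v)
    + MonoidAlgebra.of k Word (FreeMonoid.of b) * stuffleAux k (a :: u) v
    + MonoidAlgebra.of k Word (FreeMonoid.of (a + b)) * stuffleAux k u v
  termination_by u v => u.length + v.length
  decreasing_by all_goals (simp; try omega)

/-- The bilinear extension of the quasi-shuffle product of words to all of `k⟨Y⟩`. -/
def stuffleProd (k : Type) [CommRing k] [Algebra ℚ k] (P Q : QSh k) : QSh k :=
  P.coeff.sum fun u a => Q.coeff.sum fun v b =>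
    (a * b) • stuffleAux k (FreeMonoid.toList u) (FreeMonoid.toList v)

/-! The product is bilinear, so it suffices to check associativity on words. For nonempty words
`y_a u`, `y_b v`, `y_c w`, two applications of the recursion expand both `(y_a u ⊛ y_b v) ⊛ y_c w`
and `y_a u ⊛ (y_b v ⊛ y_c w)` into the same combination of seven terms `y_x (u' ⊛ v') ⊛ w'`,
resp. `y_x (u' ⊛ (v' ⊛ w'))`, whose words have smaller total length; induction on that length
concludes, the cases with an empty word being the unit laws. -/

theorem LinearMap.assoc_of_basis {ι R M : Type*} [CommSemiring R] [AddCommMonoid M] [Module R M]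
    (b : Module.Basis ι R M) (B : M →ₗ[R] M →ₗ[R] M)
    (h : ∀ i j l, B (B (b i) (b j)) (b l) = B (b i) (B (b j) (b l))) (x y z : M) :
    B (B x y) z = B x (B y z) := by
  have h₁ (i j : ι) : B (B (b i) (b j)) = B (b i) ∘ₗ B (b j) := b.ext (h i j)
  have h₂ (i : ι) (z : M) : B.flip z ∘ₗ B (b i) = B (b i) ∘ₗ B.flip z :=
    b.ext fun j => by simpa using LinearMap.congr_fun (h₁ i j) z
  have h₃ (y z : M) : B.flip z ∘ₗ B.flip y = B.flip (B y z) :=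
    b.ext fun i => by simpa using LinearMap.congr_fun (h₂ i z) y
  simpa using LinearMap.congr_fun (h₃ y z) x

namespace QSh

variable {k : Type} [CommRing k]

local notation "𝕪" a:max => MonoidAlgebra.of k Word (FreeMonoid.of a)

variable (k) in
def stuffle : QSh k →ₗ[k] QSh k →ₗ[k] QSh k :=
  (MonoidAlgebra.basis Word k).constr k fun u =>
    (MonoidAlgebra.basis Word k).constr k fun v => stuffleAux k u.toList v.toList

theorem stuffleProd_eq_stuffle [Algebra ℚ k] (P Q : QSh k) :
    stuffleProd k P Q = stuffle k P Q := by
  simp only [stuffleProd, stuffle, Module.Basis.constr_apply, LinearMap.finsupp_sum_apply,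
    LinearMap.smul_apply, Finsupp.smul_sum, mul_smul]
  rfl

theorem basis_eq_of (u : Word) : MonoidAlgebra.basis Word k u = MonoidAlgebra.of k Word u := by
  simp

theorem stuffle_of_of (u v : Word) :
    stuffle k (MonoidAlgebra.of k Word u) (MonoidAlgebra.of k Word v)
      = stuffleAux k u.toList v.toList := by
  simp only [stuffle, ← basis_eq_of, Module.Basis.constr_basis]

theorem stuffleAux_nil_left (v : List ℕ+) :
    stuffleAux k [] v = MonoidAlgebra.of k Word (FreeMonoid.ofList v) := by
  rw [stuffleAux]

theorem stuffleAux_nil_right (u : List ℕ+) :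
    stuffleAux k u [] = MonoidAlgebra.of k Word (FreeMonoid.ofList u) := by
  cases u <;> rw [stuffleAux]

theorem stuffleAux_cons_cons (a b : ℕ+) (u v : List ℕ+) :
    stuffleAux k (a :: u) (b :: v) =
      𝕪 a * stuffleAux k u (b :: v) + 𝕪 b * stuffleAux k (a :: u) v
        + 𝕪 (a + b) * stuffleAux k u v := by
  rw [stuffleAux]

theorem stuffle_one_left (Q : QSh k) : stuffle k 1 Q = Q := by
  suffices stuffle k 1 = LinearMap.id from LinearMap.congr_fun this Q
  refine (MonoidAlgebra.basis Word k).ext fun v => ?_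
  rw [basis_eq_of, ← map_one (MonoidAlgebra.of k Word), stuffle_of_of, FreeMonoid.toList_one,
    stuffleAux_nil_left]
  rfl

theorem stuffle_one_right (P : QSh k) : stuffle k P 1 = P := by
  suffices (stuffle k).flip 1 = LinearMap.id from LinearMap.congr_fun this P
  refine (MonoidAlgebra.basis Word k).ext fun u => ?_
  rw [basis_eq_of, LinearMap.flip_apply, ← map_one (MonoidAlgebra.of k Word), stuffle_of_of,
    FreeMonoid.toList_one, stuffleAux_nil_right]
  rfl

theorem letter_mul_of (a : ℕ+) (u : Word) :
    𝕪 a * MonoidAlgebra.of k Word u = MonoidAlgebra.of k Word (FreeMonoid.of a * u) :=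
  (map_mul ..).symm

theorem stuffle_letter_mul_letter_mul (a b : ℕ+) (P Q : QSh k) :
    stuffle k (𝕪 a * P) (𝕪 b * Q) =
      𝕪 a * stuffle k P (𝕪 b * Q) + 𝕪 b * stuffle k (𝕪 a * P) Q
        + 𝕪 (a + b) * stuffle k P Q := by
  let lhs : QSh k →ₗ[k] QSh k →ₗ[k] QSh k :=
    (stuffle k).compl₁₂ (LinearMap.mulLeft k (𝕪 a)) (LinearMap.mulLeft k (𝕪 b))
  let rhs : QSh k →ₗ[k] QSh k →ₗ[k] QSh k :=
    ((stuffle k).compl₂ (LinearMap.mulLeft k (𝕪 b))).compr₂ (LinearMap.mulLeft k (𝕪 a))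
    + ((stuffle k).comp (LinearMap.mulLeft k (𝕪 a))).compr₂ (LinearMap.mulLeft k (𝕪 b))
    + (stuffle k).compr₂ (LinearMap.mulLeft k (𝕪 (a + b)))
  have : lhs = rhs := LinearMap.ext_basis (MonoidAlgebra.basis Word k) (MonoidAlgebra.basis Word k)
    fun u v => by
      simp only [lhs, rhs, LinearMap.compl₁₂_apply, LinearMap.compl₂_apply,
        LinearMap.compr₂_apply, LinearMap.comp_apply, LinearMap.add_apply,
        LinearMap.mulLeft_apply, basis_eq_of, letter_mul_of, stuffle_of_of,
        FreeMonoid.toList_of_mul, stuffleAux_cons_cons]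
  exact LinearMap.congr_fun₂ this P Q

theorem stuffle_stuffle_letter_mul (a b c : ℕ+) (P Q R : QSh k) :
    stuffle k (stuffle k (𝕪 a * P) (𝕪 b * Q)) (𝕪 c * R) =
      𝕪 a * stuffle k (stuffle k P (𝕪 b * Q)) (𝕪 c * R)
      + 𝕪 b * stuffle k (stuffle k (𝕪 a * P) Q) (𝕪 c * R)
      + 𝕪 c * stuffle k (stuffle k (𝕪 a * P) (𝕪 b * Q)) R
      + 𝕪 (a + b) * stuffle k (stuffle k P Q) (𝕪 c * R)
      + 𝕪 (a + c) * stuffle k (stuffle k P (𝕪 b * Q)) R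
      + 𝕪 (b + c) * stuffle k (stuffle k (𝕪 a * P) Q) R
      + 𝕪 (a + b + c) * stuffle k (stuffle k P Q) R := by
  simp only [stuffle_letter_mul_letter_mul, map_add, LinearMap.add_apply, mul_add]
  abel

theorem stuffle_letter_mul_stuffle (a b c : ℕ+) (P Q R : QSh k) :
    stuffle k (𝕪 a * P) (stuffle k (𝕪 b * Q) (𝕪 c * R)) =
      𝕪 a * stuffle k P (stuffle k (𝕪 b * Q) (𝕪 c * R))
      + 𝕪 b * stuffle k (𝕪 a * P) (stuffle k Q (𝕪 c * R))
      + 𝕪 c * stuffle k (𝕪 a * P) (stuffle k (𝕪 b * Q) R)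
      + 𝕪 (a + b) * stuffle k P (stuffle k Q (𝕪 c * R))
      + 𝕪 (a + c) * stuffle k P (stuffle k (𝕪 b * Q) R)
      + 𝕪 (b + c) * stuffle k (𝕪 a * P) (stuffle k Q R)
      + 𝕪 (a + b + c) * stuffle k P (stuffle k Q R) := by
  simp only [stuffle_letter_mul_letter_mul, map_add, mul_add, add_assoc a b c]
  abel

theorem of_ofList_cons (a : ℕ+) (u : List ℕ+) :
    MonoidAlgebra.of k Word (.ofList (a :: u)) = 𝕪 a * MonoidAlgebra.of k Word (.ofList u) := by
  rw [FreeMonoid.ofList_cons, map_mul]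

theorem stuffle_assoc_ofList : ∀ u v w : List ℕ+,
    stuffle k
        (stuffle k (MonoidAlgebra.of k Word (.ofList u)) (MonoidAlgebra.of k Word (.ofList v)))
        (MonoidAlgebra.of k Word (.ofList w))
      = stuffle k (MonoidAlgebra.of k Word (.ofList u))
          (stuffle k (MonoidAlgebra.of k Word (.ofList v)) (MonoidAlgebra.of k Word (.ofList w)))
  | [], _, _ | _, [], _ | _, _, [] => by
    simp only [FreeMonoid.ofList_nil, map_one, stuffle_one_left, stuffle_one_right]
  | a :: u, b :: v, c :: w => by
    rw [of_ofList_cons a u, of_ofList_cons b v, of_ofList_cons c w, stuffle_stuffle_letter_mul,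
      stuffle_letter_mul_stuffle, ← of_ofList_cons a u, ← of_ofList_cons b v,
      ← of_ofList_cons c w, stuffle_assoc_ofList u (b :: v) (c :: w),
      stuffle_assoc_ofList (a :: u) v (c :: w), stuffle_assoc_ofList (a :: u) (b :: v) w,
      stuffle_assoc_ofList u v (c :: w), stuffle_assoc_ofList u (b :: v) w,
      stuffle_assoc_ofList (a :: u) v w, stuffle_assoc_ofList u v w]
termination_by u v w => u.length + v.length + w.length

end QSh

/-- the quasi-shuffle product on `k⟨Y⟩` is associative. -/
theorem stuffle_assoc (k : Type) [CommRing k] [Algebra ℚ k] (P Q R : QSh k) :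
    stuffleProd k (stuffleProd k P Q) R = stuffleProd k P (stuffleProd k Q R) := by
  simp only [QSh.stuffleProd_eq_stuffle]
  refine LinearMap.assoc_of_basis (MonoidAlgebra.basis Word k) (QSh.stuffle k)
    (fun u v w => ?_) P Q R
  simpa only [QSh.basis_eq_of, FreeMonoid.ofList_toList] using
    QSh.stuffle_assoc_ofList u.toList v.toList w.toList

end
end

section
/- For each n ≥ 1, y_n = Σ_{J=(j_1,...,j_r), j_1+···+j_r = n} R^J / π(J), where R^J = R_{j_1}···R_{j_r} and π(J) = j_1(j_1+j_2)···(j_1+···+j_r) — equivalently y_n = R_n/n + (terms R^J with length(J) > 1); consequently each y_n lies in the subalgebra generated by {R_k}_{k≤n} and conversely R_n is a polynomial in {y_k}_{k≤n}, homogeneous of weight n. -/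
open scoped TensorProduct
open Finset

noncomputable section

/-- Scalar action of a rational `c` on an element of a `k`-module, through `algebraMap ℚ k`. -/
def qsmul (k : Type) [CommRing k] [Algebra ℚ k] {M : Type} [AddCommGroup M] [Module k M]
    (c : ℚ) (x : M) : M := (algebraMap ℚ k c) • x

/-- The generating series `𝒴(t) = 1 + Σ_{n ≥ 1} y_n t^n ∈ k⟨Y⟩[[t]]`. -/
def Yser (k : Type) [CommRing k] [Algebra ℚ k] : PowerSeries (QSh k) :=
  PowerSeries.mk (yy k)

/-- `log 𝒴(t) = Σ_{j ≥ 1} (-1)^{j-1} (𝒴(t) - 1)^j / j`, which makes sense coefficientwise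
since `𝒴(t) - 1` has zero constant term. -/
def logY (k : Type) [CommRing k] [Algebra ℚ k] : PowerSeries (QSh k) :=
  PowerSeries.mk fun n => ∑ j ∈ Finset.Icc 1 n,
    qsmul k ((-1 : ℚ) ^ (j - 1) / j) (PowerSeries.coeff (R := QSh k) n ((Yser k - 1) ^ j))

/-- The word `y_{j_1} ⋯ y_{j_l}` attached to a list `(j_1, …, j_l)` of positive integers. -/
def wordOf (k : Type) [CommRing k] (L : List ℕ) : QSh k := (L.map (yy k)).prod

/-- `π₁(y_n) = y_n + Σ_{l ≥ 2} ((-1)^{l-1}/l) Σ_{j_1+⋯+j_l = n, j_i ≥ 1} y_{j_1} ⋯ y_{j_l}`. -/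
def pi1 (k : Type) [CommRing k] [Algebra ℚ k] (n : ℕ) : QSh k :=
  yy k n + ∑ c ∈ Finset.univ.filter (fun c : Composition n => 2 ≤ c.length),
    qsmul k ((-1 : ℚ) ^ (c.length - 1) / c.length) (wordOf k c.blocks)

/-- The coefficients `X_n` of the inverse series `𝒴(t)^{-1} = 1 + Σ_{n ≥ 1} X_n t^n`. -/
def Xc (k : Type) [CommRing k] [Algebra ℚ k] : ℕ → QSh k
  | 0 => 1
  | n + 1 => - ∑ i ∈ Finset.range (n + 1), yy k (i + 1) * Xc k (n - i)
  termination_by n => n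
  decreasing_by omega

/-- The series `𝒴(t)^{-1}`. -/
def Xser (k : Type) [CommRing k] [Algebra ℚ k] : PowerSeries (QSh k) :=
  PowerSeries.mk (Xc k)

/-- The formal derivative `d/dt` on `k⟨Y⟩[[t]]`. -/
def Dt (k : Type) [CommRing k] [Algebra ℚ k] (φ : PowerSeries (QSh k)) :
    PowerSeries (QSh k) :=
  PowerSeries.mk fun n => (n + 1) • PowerSeries.coeff (R := QSh k) (n + 1) φ

/-- `L(t) = 𝒴'(t) 𝒴(t)^{-1} = Σ_{n ≥ 1} L_n t^{n-1}`; `Lc m` is `L_{m+1}`. -/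
def Lc (k : Type) [CommRing k] [Algebra ℚ k] (m : ℕ) : QSh k :=
  PowerSeries.coeff (R := QSh k) m (Dt k (Yser k) * Xser k)

/-- `R(t) = 𝒴(t)^{-1} 𝒴'(t) = Σ_{n ≥ 1} R_n t^{n-1}`; `Rc m` is `R_{m+1}`. -/
def Rc (k : Type) [CommRing k] [Algebra ℚ k] (m : ℕ) : QSh k :=
  PowerSeries.coeff (R := QSh k) m (Xser k * Dt k (Yser k))

/-- `π_u(J) = j_1 (j_1+j_2) ⋯ (j_1+⋯+j_r)`, the product of the partial sums of the
composition `J = (j_1, …, j_r)`. -/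
def piu (L : List ℕ) : ℕ :=
  ((List.range L.length).map fun i => (L.take (i + 1)).sum).prod

/-!
From `𝒴 𝒴⁻¹ = 1` we get `𝒴' = 𝒴 · (𝒴⁻¹ 𝒴')`, i.e. `(n+1) y_{n+1} = Σ_{i+j=n} y_i R_{j+1}`, and
over a `ℚ`-algebra this recursion determines the `y_n` from `y_0 = 1`. The sum
`Σ_J R^J / π_u(J)` satisfies the same recursion: splitting off the last block `j` of a composition
`J` of `n+1` leaves a composition `J'` of `n+1-j`, and `π_u(J) = π_u(J') (n+1)`.
Conversely `R = 𝒴⁻¹ 𝒴'`, and the coefficients of `𝒴⁻¹` are polynomials in the `y_j`.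
-/

namespace Composition

lemma sum_succ_eq_sum_antidiagonal {M : Type*} [AddCommMonoid M] (n : ℕ) (f : List ℕ → M) :
    ∑ c : Composition (n + 1), f c.blocks =
      ∑ p ∈ antidiagonal n, ∑ c : Composition p.1, f (c.blocks ++ [p.2 + 1]) := by
  rw [sum_sigma']
  refine (sum_bij (fun x hx => (x.2.append (single (x.1.2 + 1) x.1.2.succ_pos)).cast
      (by have := (mem_sigma.1 hx).1; rw [HasAntidiagonal.mem_antidiagonal] at this; omega))
      (fun _ _ => mem_univ _) ?_ ?_ ?_).symm
  · rintro ⟨⟨a, b⟩, c⟩ _ ⟨⟨a', b'⟩, c'⟩ _ h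
    obtain ⟨hc, hb⟩ := List.append_inj' (congrArg Composition.blocks h) rfl
    simp only [single_blocks, List.cons.injEq, add_left_inj, and_true] at hc hb
    have ha : a = a' := by
      have hsum := c.blocks_sum
      rw [hc] at hsum
      exact hsum.symm.trans c'.blocks_sum
    subst ha hb
    simpa using Composition.ext hc
  · intro c _
    obtain ⟨L, j, hL⟩ := (List.eq_nil_or_concat' c.blocks).resolve_left fun h => by
      simpa [h] using c.blocks_sum
    have hj : 1 ≤ j := c.one_le_blocks (by simp [hL])
    have hsum : L.sum + (j - 1) = n := by have := c.blocks_sum; simp [hL] at this; omega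
    refine ⟨⟨(L.sum, j - 1), ⟨L, fun h => c.blocks_pos (by simp [hL, h]), rfl⟩⟩,
      by simpa using hsum, Composition.ext ?_⟩
    simp [hL, Nat.sub_add_cancel hj]
  · intro x _
    simp

end Composition

lemma piu_append_singleton (L : List ℕ) (j : ℕ) : piu (L ++ [j]) = piu L * (L.sum + j) := by
  simp only [piu, List.length_append, List.length_singleton, List.range_succ, List.map_append,
    List.prod_append]
  congr 1
  · refine congrArg _ (List.map_congr_left fun i hi => ?_)
    rw [List.take_append_of_le_length (by simpa [Nat.succ_le_iff] using List.mem_range.1 hi)]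
  · simp

section Expansion

variable (k : Type) [CommRing k] [Algebra ℚ k]

lemma nsmul_qsmul {M : Type} [AddCommGroup M] [Module k M] (n : ℕ) (c : ℚ) (x : M) :
    n • qsmul k c x = qsmul k (n * c) x := by
  rw [← Nat.cast_smul_eq_nsmul k, qsmul, qsmul, smul_smul, map_mul, map_natCast]

lemma qsmul_nsmul {M : Type} [AddCommGroup M] [Module k M] (c : ℚ) (n : ℕ) (x : M) :
    qsmul k c (n • x) = qsmul k (c * n) x := by
  rw [← Nat.cast_smul_eq_nsmul k, qsmul, qsmul, smul_smul, map_mul, map_natCast]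

lemma qsmul_inv_nsmul {M : Type} [AddCommGroup M] [Module k M] {n : ℕ} (hn : n ≠ 0) (x : M) :
    qsmul k (n : ℚ)⁻¹ (n • x) = x := by
  rw [qsmul_nsmul, inv_mul_cancel₀ (by exact_mod_cast hn), qsmul, map_one, one_smul]

variable {A : Type} [Ring A] [Algebra k A]

lemma qsmul_mul (c : ℚ) (x y : A) : qsmul k c x * y = qsmul k c (x * y) :=
  smul_mul_assoc _ x y

/-- `Σ_{|J| = n} R^J / π_u(J)`; as in `Rc`, the block `j` contributes `R (j - 1)`. -/
def compositionSum (R : ℕ → A) (n : ℕ) : A :=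
  ∑ c : Composition n, qsmul k ((1 : ℚ) / (piu c.blocks)) ((c.blocks.map fun j => R (j - 1)).prod)

variable {k}

lemma compositionSum_zero (R : ℕ → A) : compositionSum k R 0 = 1 := by
  have h (c : Composition 0) : c = Composition.ones 0 :=
    Composition.eq_ones_iff_le_length.2 (Nat.zero_le _)
  rw [compositionSum, Fintype.sum_eq_single _ fun c hc => (hc (h c)).elim]
  simp [piu, qsmul]

lemma succ_nsmul_compositionSum_succ (R : ℕ → A) (n : ℕ) :
    (n + 1) • compositionSum k R (n + 1) =
      ∑ p ∈ antidiagonal n, compositionSum k R p.1 * R p.2 := by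
  rw [compositionSum, Composition.sum_succ_eq_sum_antidiagonal n
    fun L => qsmul k ((1 : ℚ) / piu L) ((L.map fun j => R (j - 1)).prod), smul_sum]
  refine sum_congr rfl fun p hp => ?_
  rw [HasAntidiagonal.mem_antidiagonal] at hp
  rw [compositionSum, sum_mul, smul_sum]
  refine sum_congr rfl fun c _ => ?_
  rw [piu_append_singleton, c.blocks_sum, List.map_append, List.prod_append, nsmul_qsmul,
    qsmul_mul, ← hp]
  congr 1
  · have hN : ((p.1 + p.2 + 1 : ℕ) : ℚ) ≠ 0 := by positivity
    rw [← add_assoc, Nat.cast_mul, one_div, one_div, mul_inv, mul_left_comm,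
      mul_inv_cancel₀ hN, mul_one]
  · simp

theorem eq_compositionSum_of_succ_nsmul (R y : ℕ → A) (h0 : y 0 = 1)
    (hsucc : ∀ n, (n + 1) • y (n + 1) = ∑ p ∈ antidiagonal n, y p.1 * R p.2) :
    y = compositionSum k R := by
  funext n
  induction n using Nat.strong_induction_on with
  | _ n ih =>
    cases n with
    | zero => rw [h0, compositionSum_zero]
    | succ n =>
      have hrec : ∑ p ∈ antidiagonal n, y p.1 * R p.2 =
          ∑ p ∈ antidiagonal n, compositionSum k R p.1 * R p.2 :=
        sum_congr rfl fun p hp => by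
          rw [ih p.1 (Nat.antidiagonal.fst_lt hp)]
      calc y (n + 1) = qsmul k ((n + 1 : ℕ) : ℚ)⁻¹ ((n + 1) • y (n + 1)) :=
            (qsmul_inv_nsmul k n.succ_ne_zero _).symm
        _ = qsmul k ((n + 1 : ℕ) : ℚ)⁻¹ ((n + 1) • compositionSum k R (n + 1)) := by
            rw [hsucc, hrec, succ_nsmul_compositionSum_succ]
        _ = compositionSum k R (n + 1) := qsmul_inv_nsmul k n.succ_ne_zero _

end Expansion

section Subalgebras

variable (k : Type) [CommRing k] {A : Type} [Ring A] [Algebra k A]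

abbrev adjoinIcc (f : ℕ → A) (n : ℕ) : Subalgebra k A :=
  Algebra.adjoin k {x | ∃ j, 1 ≤ j ∧ j ≤ n ∧ x = f j}

variable {k}

lemma adjoinIcc_mono (f : ℕ → A) : Monotone (adjoinIcc k f) :=
  fun _ _ hmn => Algebra.adjoin_mono fun _ ⟨j, h1, hj, hx⟩ => ⟨j, h1, hj.trans hmn, hx⟩

lemma apply_mem_adjoinIcc (f : ℕ → A) {j n : ℕ} (h1 : 1 ≤ j) (hjn : j ≤ n) :
    f j ∈ adjoinIcc k f n :=
  Algebra.subset_adjoin ⟨j, h1, hjn, rfl⟩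

lemma compositionSum_mem_adjoinIcc [Algebra ℚ k] (R : ℕ → A) (n : ℕ) :
    compositionSum k R n ∈ adjoinIcc k (fun j => R (j - 1)) n :=
  Subalgebra.sum_mem _ fun c _ => Subalgebra.smul_mem _ (Subalgebra.list_prod_mem _ fun _ hx => by
    obtain ⟨j, hj, rfl⟩ := List.mem_map.1 hx
    exact apply_mem_adjoinIcc (fun j => R (j - 1)) (c.one_le_blocks hj) (c.blocks_le hj)) _

end Subalgebras

lemma yy_zero (k : Type) [CommRing k] : yy k 0 = 1 := dif_neg (lt_irrefl 0)

section Series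

variable (k : Type) [CommRing k] [Algebra ℚ k]

lemma Yser_mul_Xser : Yser k * Xser k = 1 := by
  ext n
  rw [PowerSeries.coeff_mul]
  cases n with
  | zero => simp [Yser, Xser, yy_zero, Xc]
  | succ n =>
    rw [Nat.sum_antidiagonal_succ, Nat.sum_antidiagonal_eq_sum_range_succ_mk]
    simp [Yser, Xser, yy_zero, Xc]

lemma succ_nsmul_yy_succ (n : ℕ) :
    (n + 1) • yy k (n + 1) = ∑ p ∈ antidiagonal n, yy k p.1 * Rc k p.2 := by
  have hD : Dt k (Yser k) = Yser k * (Xser k * Dt k (Yser k)) := by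
    rw [← mul_assoc, Yser_mul_Xser, one_mul]
  have := congrArg (PowerSeries.coeff (R := QSh k) n) hD
  simpa [Dt, Yser, Rc, PowerSeries.coeff_mul] using this

lemma yy_eq_compositionSum : yy k = compositionSum k (Rc k) :=
  eq_compositionSum_of_succ_nsmul (Rc k) (yy k) (yy_zero k) (succ_nsmul_yy_succ k)

lemma Xc_mem_adjoinIcc (m : ℕ) : Xc k m ∈ adjoinIcc k (yy k) m := by
  induction m using Nat.strong_induction_on with
  | _ m ih =>
    match m with
    | 0 => rw [Xc]; exact Subalgebra.one_mem _
    | m + 1 =>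
      rw [Xc]
      refine Subalgebra.neg_mem _ (Subalgebra.sum_mem _ fun i hi => Subalgebra.mul_mem _ ?_ ?_)
      · exact apply_mem_adjoinIcc _ (Nat.le_add_left 1 i) (by simpa using hi)
      · exact adjoinIcc_mono _ (by omega) (ih (m - i) (by omega))

lemma Rc_mem_adjoinIcc (m : ℕ) : Rc k m ∈ adjoinIcc k (yy k) (m + 1) := by
  rw [Rc, PowerSeries.coeff_mul]
  refine Subalgebra.sum_mem _ fun p hp => ?_
  rw [HasAntidiagonal.mem_antidiagonal] at hp
  simp only [Xser, Dt, Yser, PowerSeries.coeff_mk]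
  refine Subalgebra.mul_mem _ ?_ (nsmul_mem ?_ _)
  · exact adjoinIcc_mono _ (by omega) (Xc_mem_adjoinIcc k p.1)
  · exact apply_mem_adjoinIcc _ (Nat.le_add_left 1 p.2) (by omega)

end Series

/-- for each `n ≥ 1`, `y_n = Σ_{J=(j_1,…,j_r), w(J)=n} R^J / π_u(J)` where
`R^J = R_{j_1} ⋯ R_{j_r}`; consequently `y_n` lies in the subalgebra generated by the
`R_j`, `j ≤ n`, and conversely `R_n` lies in the subalgebra generated by the `y_j`, `j ≤ n`. -/
theorem y_in_terms_of_R (k : Type) [CommRing k] [Algebra ℚ k] (n : ℕ) (hn : 1 ≤ n) :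
    yy k n = ∑ c : Composition n,
      qsmul k ((1 : ℚ) / (piu c.blocks)) ((c.blocks.map fun j => Rc k (j - 1)).prod) ∧
    yy k n ∈ Algebra.adjoin k {x : QSh k | ∃ j, 1 ≤ j ∧ j ≤ n ∧ x = Rc k (j - 1)} ∧
    Rc k (n - 1) ∈ Algebra.adjoin k {x : QSh k | ∃ j, 1 ≤ j ∧ j ≤ n ∧ x = yy k j} := by
  have hy : yy k n = compositionSum k (Rc k) n := congrFun (yy_eq_compositionSum k) n
  refine ⟨hy, hy ▸ compositionSum_mem_adjoinIcc (Rc k) n, ?_⟩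
  obtain ⟨m, rfl⟩ := Nat.exists_eq_add_of_le' hn
  exact Rc_mem_adjoinIcc k m
end
end
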